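/- Fix an integer n ≥ 1 and a real constant k. Let f : ℝ → ℝ be three times differentiable on (0, ∞) with f′(s) ≠ 0 for all s > 0, and suppose that for all s > 0: d/ds[(f′(s))^{n+1}] = (n+1)·k·(sinh s)ⁿ. Define φ(r) = f(2r). Then φ is three times differentiable on (0, ∞), φ′(r) ≠ 0 there, and for all r > 0: φ′′′(r) = n·φ′′(r)·(coth r + tanh r − φ′′(r)/φ′(r)). -/

import Mathlib

open Set

/- STATEMENT 18: if f is three times differentiable on (0, ∞), f′ ≠ 0 there, and
d/ds[(f′)^{n+1}] = (n+1)k(sinh s)ⁿ, then φ(r) = f(2r) is three times differentiable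
on (0, ∞), φ′ ≠ 0 there, and φ′′′ = nφ′′(coth r + tanh r − φ′′/φ′). -/

theorem stenzel_potential_equation
    (n : ℕ) (hn : 1 ≤ n) (k : ℝ) (f : ℝ → ℝ)
    (hf1 : ∀ s ∈ Ioi (0:ℝ), DifferentiableAt ℝ f s)
    (hf2 : ∀ s ∈ Ioi (0:ℝ), DifferentiableAt ℝ (deriv f) s)
    (hf3 : ∀ s ∈ Ioi (0:ℝ), DifferentiableAt ℝ (deriv (deriv f)) s)
    (hf0 : ∀ s ∈ Ioi (0:ℝ), deriv f s ≠ 0)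
    (heq : ∀ s ∈ Ioi (0:ℝ),
      deriv (fun t => (deriv f t) ^ (n+1)) s = ((n : ℝ) + 1) * k * (Real.sinh s) ^ n) :
    ∀ r ∈ Ioi (0:ℝ),
      DifferentiableAt ℝ (fun r' => f (2 * r')) r ∧
      DifferentiableAt ℝ (deriv (fun r' => f (2 * r'))) r ∧
      DifferentiableAt ℝ (deriv (deriv (fun r' => f (2 * r')))) r ∧
      deriv (fun r' => f (2 * r')) r ≠ 0 ∧
      deriv (deriv (deriv (fun r' => f (2 * r')))) r
        = (n : ℝ) * deriv (deriv (fun r' => f (2 * r'))) r *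
            (Real.cosh r / Real.sinh r + Real.tanh r
              - deriv (deriv (fun r' => f (2 * r'))) r / deriv (fun r' => f (2 * r')) r) := by
  obtain ⟨m, rfl⟩ : ∃ m, n = m + 1 := ⟨n - 1, (Nat.succ_pred_eq_of_pos hn).symm⟩
  set g := deriv f with hg
  set g2 := deriv g with hg2
  set g3 := deriv g2 with hg3
  have hmem2 : ∀ x ∈ Ioi (0:ℝ), (2 * x) ∈ Ioi (0:ℝ) := by
    intro x hx
    simp only [mem_Ioi] at hx ⊢
    linarith
  have hlin : ∀ x : ℝ, HasDerivAt (fun y : ℝ => 2 * y) 2 x := by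
    intro x
    simpa using (hasDerivAt_id x).const_mul 2
  set φ : ℝ → ℝ := fun r' => f (2 * r') with hφ
  -- first derivative of φ
  have hD1 : ∀ x ∈ Ioi (0:ℝ), HasDerivAt φ (2 * g (2 * x)) x := by
    intro x hx
    have := ((hf1 _ (hmem2 x hx)).hasDerivAt.comp x (hlin x))
    simpa [Function.comp_def, mul_comm, hφ, ← hg] using this
  have hEq1 : EqOn (deriv φ) (fun x => 2 * g (2 * x)) (Ioi (0:ℝ)) :=
    fun x hx => (hD1 x hx).deriv
  -- second derivative of φ
  have hD2 : ∀ x ∈ Ioi (0:ℝ), HasDerivAt (deriv φ) (4 * g2 (2 * x)) x := by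
    intro x hx
    have h2 : HasDerivAt (fun y => 2 * g (2 * y)) (4 * g2 (2 * x)) x := by
      have hcomp : HasDerivAt (fun y => g (2 * y)) (g2 (2 * x) * 2) x := by
        simpa [Function.comp_def, ← hg2] using ((hf2 _ (hmem2 x hx)).hasDerivAt.comp x (hlin x))
      have := hcomp.const_mul 2
      rw [show (4:ℝ) * g2 (2 * x) = 2 * (g2 (2 * x) * 2) by ring]
      exact this
    exact h2.congr_of_eventuallyEq
      (Filter.eventuallyEq_of_mem (isOpen_Ioi.mem_nhds hx) hEq1)
  have hEq2 : EqOn (deriv (deriv φ)) (fun x => 4 * g2 (2 * x)) (Ioi (0:ℝ)) :=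
    fun x hx => (hD2 x hx).deriv
  -- third derivative of φ
  have hD3 : ∀ x ∈ Ioi (0:ℝ), HasDerivAt (deriv (deriv φ)) (8 * g3 (2 * x)) x := by
    intro x hx
    have h3 : HasDerivAt (fun y => 4 * g2 (2 * y)) (8 * g3 (2 * x)) x := by
      have hcomp : HasDerivAt (fun y => g2 (2 * y)) (g3 (2 * x) * 2) x := by
        simpa [Function.comp_def, ← hg3] using ((hf3 _ (hmem2 x hx)).hasDerivAt.comp x (hlin x))
      have := hcomp.const_mul 4
      rw [show (8:ℝ) * g3 (2 * x) = 4 * (g3 (2 * x) * 2) by ring]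
      exact this
    exact h3.congr_of_eventuallyEq
      (Filter.eventuallyEq_of_mem (isOpen_Ioi.mem_nhds hx) hEq2)
  have hEq3 : EqOn (deriv (deriv (deriv φ))) (fun x => 8 * g3 (2 * x)) (Ioi (0:ℝ)) :=
    fun x hx => (hD3 x hx).deriv
  -- key identity from heq : g^(m+1) * g2 = k * sinh^(m+1) on Ioi 0
  have hB : ∀ s ∈ Ioi (0:ℝ), g s ^ (m+1) * g2 s = k * Real.sinh s ^ (m+1) := by
    intro s hs
    have hpow : HasDerivAt (fun t => g t ^ (m+1+1))
        ((m+1+1 : ℕ) * g s ^ (m+1) * g2 s) s := by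
      simpa [Pi.pow_def, ← hg2] using (hf2 s hs).hasDerivAt.pow (m+1+1)
    have h1 := hpow.deriv
    have h2 := heq s hs
    rw [h1] at h2
    have hne : ((m:ℝ) + 1 + 1) ≠ 0 := by positivity
    push_cast at h2
    have : ((m:ℝ) + 1 + 1) * (g s ^ (m+1) * g2 s)
        = ((m:ℝ) + 1 + 1) * (k * Real.sinh s ^ (m+1)) := by
      linarith [h2]
    exact mul_left_cancel₀ hne this
  -- differentiate hB
  have hC : ∀ s ∈ Ioi (0:ℝ),
      ((m+1 : ℕ) * g s ^ m * g2 s) * g2 s + g s ^ (m+1) * g3 s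
        = k * ((m+1 : ℕ) * Real.sinh s ^ m * Real.cosh s) := by
    intro s hs
    have hL : HasDerivAt (fun t => g t ^ (m+1) * g2 t)
        (((m+1 : ℕ) * g s ^ m * g2 s) * g2 s + g s ^ (m+1) * g3 s) s := by
      have h1 : HasDerivAt (fun t => g t ^ (m+1)) ((m+1 : ℕ) * g s ^ m * g2 s) s := by
        simpa [Pi.pow_def, ← hg2] using (hf2 s hs).hasDerivAt.pow (m+1)
      exact h1.mul (hf3 s hs).hasDerivAt
    have hR : HasDerivAt (fun t => k * Real.sinh t ^ (m+1))
        (k * ((m+1 : ℕ) * Real.sinh s ^ m * Real.cosh s)) s := by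
      have := ((Real.hasDerivAt_sinh s).pow (m+1)).const_mul k
      simpa using this
    have hfeq : (fun t => g t ^ (m+1) * g2 t) =ᶠ[nhds s]
        (fun t => k * Real.sinh t ^ (m+1)) :=
      Filter.eventuallyEq_of_mem (isOpen_Ioi.mem_nhds hs) (fun t ht => hB t ht)
    have := (hL.congr_of_eventuallyEq hfeq.symm).unique hR
    linarith [hL.deriv, this]
  -- main proof
  intro r hr
  have hr0 : (0:ℝ) < r := hr
  have h2r : (2 * r) ∈ Ioi (0:ℝ) := hmem2 r hr
  set A := g (2 * r) with hA
  set B := g2 (2 * r) with hBdef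
  set C := g3 (2 * r) with hC3
  have hAne : A ≠ 0 := hf0 _ h2r
  have hs : Real.sinh r ≠ 0 := (Real.sinh_pos_iff.mpr hr0).ne'
  have hc : Real.cosh r ≠ 0 := (Real.cosh_pos r).ne'
  have hcs : Real.cosh r ^ 2 - Real.sinh r ^ 2 = 1 := Real.cosh_sq_sub_sinh_sq r
  -- key polynomial identity: eliminate k
  have key : Real.sinh (2*r) * (((m:ℝ)+1) * A ^ m * B * B + A ^ (m+1) * C)
      = ((m:ℝ)+1) * Real.cosh (2*r) * (A ^ (m+1) * B) := by
    have h1 := hC (2*r) h2r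
    have h2 := hB (2*r) h2r
    push_cast at h1
    linear_combination Real.sinh (2*r) * h1 - ((m:ℝ)+1) * Real.cosh (2*r) * h2
  rw [Real.sinh_two_mul, Real.cosh_two_mul] at key
  have key2 : (2 * Real.sinh r * Real.cosh r) * (((m:ℝ)+1) * B * B + A * C)
      = ((m:ℝ)+1) * (Real.cosh r ^ 2 + Real.sinh r ^ 2) * (A * B) := by
    apply mul_left_cancel₀ (pow_ne_zero m hAne)
    linear_combination key
  refine ⟨(hD1 r hr).differentiableAt, (hD2 r hr).differentiableAt,
    (hD3 r hr).differentiableAt, ?_, ?_⟩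
  · rw [hEq1 hr]
    simp only [ne_eq, mul_eq_zero]
    push_neg
    exact ⟨by norm_num, hAne⟩
  · rw [hEq1 hr, hEq2 hr, hEq3 hr, Real.tanh_eq_sinh_div_cosh]
    push_cast
    rw [← hA, ← hBdef, ← hC3]
    field_simp
    linear_combination 8 * key2
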